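/- arXiv:1104.3731 — 2 statements merged into one kernel-verified Lean document; each statement's English description precedes it below -/
import Mathlib

section
/- Fix an integer d ≥ 1. For every z ∈ [0, μ^{−1}) and every x ∈ ℤ^d, the Domb–Joyce two-point function converges to the self-avoiding walk two-point function as the interaction strength tends to infinity: lim_{g→∞} G^{DJ}_{g,z}(x) = G_z(x). -/
/-!
Formalization of statements from "The strong interaction limit of
continuous-time weakly self-avoiding walk" by Brydges, Dahlqvist, Slade.

An `n`-step nearest-neighbour walk on `ℤ^d` starting at the origin is encoded
bijectively by its sequence of steps `s : Fin n → Fin d × Bool`, a step being a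
coordinate direction together with a sign.
-/

open scoped BigOperators Topology
open Filter

namespace StrongInteraction

/-- The unit step in coordinate direction `e.1`, with sign `e.2`. -/
def stepVec (d : ℕ) (e : Fin d × Bool) : Fin d → ℤ :=
  fun i => if i = e.1 then (if e.2 then 1 else -1) else 0

/-- `walkPos s k` is the position `Y_k` of the walk started at the origin whose
successive nearest-neighbour steps are given by `s`. -/
def walkPos {d n : ℕ} (s : Fin n → Fin d × Bool) (k : Fin (n + 1)) : Fin d → ℤ :=
  ∑ i ∈ Finset.univ.filter (fun i : Fin n => (i : ℕ) < (k : ℕ)), stepVec d (s i)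

/-- `n_x(Y)`: the number of visits to `x` by the walk. -/
def visits {d n : ℕ} (s : Fin n → Fin d × Bool) (x : Fin d → ℤ) : ℕ :=
  (Finset.univ.filter (fun k : Fin (n + 1) => walkPos s k = x)).card

/-- The set of distinct vertices visited by the walk. -/
def walkRange {d n : ℕ} (s : Fin n → Fin d × Bool) : Finset (Fin d → ℤ) :=
  Finset.image (walkPos s) Finset.univ

/-- A walk is self-avoiding when its positions are pairwise distinct. -/
def SelfAvoiding {d n : ℕ} (s : Fin n → Fin d × Bool) : Prop :=
  Function.Injective (walkPos s)

instance {d n : ℕ} (s : Fin n → Fin d × Bool) : Decidable (SelfAvoiding s) :=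
  inferInstanceAs (Decidable (Function.Injective (walkPos s)))

/-- `c_n`: the number of `n`-step self-avoiding walks. -/
def csaw (d n : ℕ) : ℕ :=
  (Finset.univ.filter fun s : Fin n → Fin d × Bool => SelfAvoiding s).card


/-- The Domb–Joyce weight `exp(-g Σ_{x∈ℤ^d} n_x(Y)(n_x(Y)-1))` of a walk.
(The sum over `x ∈ ℤ^d` reduces to the sum over the range of the walk, since
`n_x = 0` elsewhere.) -/
noncomputable def djWeight {d n : ℕ} (g : ℝ) (s : Fin n → Fin d × Bool) : ℝ :=
  Real.exp (-g * ∑ x ∈ walkRange s, (visits s x : ℝ) * ((visits s x : ℝ) - 1))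

/-- `c_n^{DJ}(g) = Σ_{Y ∈ W_n} exp(-g Σ_x n_x(Y)(n_x(Y)-1))`. -/
noncomputable def cDJ (d n : ℕ) (g : ℝ) : ℝ :=
  ∑ s : Fin n → Fin d × Bool, djWeight g s

/-- `c_{n,g}^{DJ}(x)`: the Domb–Joyce weight of walks ending at `x`. -/
noncomputable def cDJAt (d n : ℕ) (g : ℝ) (x : Fin d → ℤ) : ℝ :=
  ∑ s ∈ Finset.univ.filter (fun s : Fin n → Fin d × Bool => walkPos s (Fin.last n) = x),
    djWeight g s

/-- `c_n(x)`: the number of `n`-step self-avoiding walks ending at `x`. -/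
def csawAt (d n : ℕ) (x : Fin d → ℤ) : ℕ :=
  (Finset.univ.filter fun s : Fin n → Fin d × Bool =>
    SelfAvoiding s ∧ walkPos s (Fin.last n) = x).card

section Aux
variable {d n : ℕ}

/-- Extension of the step sequence to ℕ. -/
def sExt (s : Fin n → Fin d × Bool) (i : ℕ) : Fin d → ℤ :=
  if h : i < n then stepVec d (s ⟨i, h⟩) else 0

lemma walkPos_eq_range (s : Fin n → Fin d × Bool) (k : Fin (n + 1)) :
    walkPos s k = ∑ i ∈ Finset.range (k : ℕ), sExt s i := by
  unfold walkPos
  refine Finset.sum_bij' (fun (i : Fin n) _ => (i : ℕ))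
    (fun j hj => ⟨j, lt_of_lt_of_le (Finset.mem_range.mp hj) (Nat.lt_succ_iff.mp k.isLt)⟩)
    ?_ ?_ ?_ ?_ ?_
  · intro a ha
    exact Finset.mem_range.mpr ((Finset.mem_filter.mp ha).2)
  · intro a ha
    simp only [Finset.mem_filter, Finset.mem_univ, true_and]
    exact Finset.mem_range.mp ha
  · intro a ha; rfl
  · intro a ha; rfl
  · intro a ha
    rw [sExt, dif_pos]

end Aux
/-- The (integer) self-intersection penalty. -/
def pen {d n : ℕ} (s : Fin n → Fin d × Bool) : ℕ :=
  ∑ x ∈ walkRange s, visits s x * (visits s x - 1)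

section Aux2
variable {d n : ℕ}

lemma one_le_visits_of_mem {s : Fin n → Fin d × Bool} {x : Fin d → ℤ}
    (hx : x ∈ walkRange s) : 1 ≤ visits s x := by
  obtain ⟨k, -, hk⟩ := Finset.mem_image.mp hx
  refine Finset.card_pos.mpr ⟨k, ?_⟩
  simp [hk]

lemma djWeight_eq_pen (g : ℝ) (s : Fin n → Fin d × Bool) :
    djWeight g s = Real.exp (-g * (pen s : ℝ)) := by
  unfold djWeight pen
  congr 1
  push_cast
  congr 1
  refine Finset.sum_congr rfl fun x hx => ?_
  have h1 : 1 ≤ visits s x := one_le_visits_of_mem hx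
  have : ((visits s x - 1 : ℕ) : ℝ) = (visits s x : ℝ) - 1 := by
    push_cast [h1]; ring
  rw [this]

lemma pen_eq_zero_of_selfAvoiding {s : Fin n → Fin d × Bool} (hs : SelfAvoiding s) :
    pen s = 0 := by
  refine Finset.sum_eq_zero fun x hx => ?_
  have : visits s x ≤ 1 := by
    refine Finset.card_le_one.mpr fun k hk l hl => ?_
    apply hs
    rw [(Finset.mem_filter.mp hk).2, (Finset.mem_filter.mp hl).2]
  have h1 := one_le_visits_of_mem hx
  have : visits s x = 1 := le_antisymm this h1
  simp [this]

lemma two_le_pen_of_not_selfAvoiding {s : Fin n → Fin d × Bool} (hs : ¬ SelfAvoiding s) :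
    2 ≤ pen s := by
  rw [SelfAvoiding, Function.not_injective_iff] at hs
  obtain ⟨k, l, hkl, hne⟩ := hs
  have hxmem : walkPos s k ∈ walkRange s := Finset.mem_image_of_mem _ (Finset.mem_univ k)
  have h2 : 2 ≤ visits s (walkPos s k) := by
    have : ({k, l} : Finset (Fin (n+1))) ⊆
        Finset.univ.filter (fun m => walkPos s m = walkPos s k) := by
      intro m hm
      rcases Finset.mem_insert.mp hm with rfl | hm
      · simp
      · simp [Finset.mem_singleton.mp hm, hkl.symm]
    calc 2 = ({k, l} : Finset (Fin (n+1))).card := (Finset.card_pair hne).symm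
    _ ≤ _ := Finset.card_le_card this
  calc (2 : ℕ) = 2 * (2 - 1) := rfl
  _ ≤ visits s (walkPos s k) * (visits s (walkPos s k) - 1) :=
      Nat.mul_le_mul h2 (Nat.sub_le_sub_right h2 1)
  _ ≤ pen s :=
      Finset.single_le_sum (f := fun x => visits s x * (visits s x - 1))
        (fun x _ => Nat.zero_le _) hxmem

lemma djWeight_nonneg (g : ℝ) (s : Fin n → Fin d × Bool) : 0 ≤ djWeight g s :=
  (Real.exp_pos _).le

lemma djWeight_antitone {g g' : ℝ} (h : g ≤ g') (s : Fin n → Fin d × Bool) :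
    djWeight g' s ≤ djWeight g s := by
  rw [djWeight_eq_pen, djWeight_eq_pen]
  apply Real.exp_le_exp.mpr
  have : (0:ℝ) ≤ (pen s : ℝ) := Nat.cast_nonneg _
  nlinarith

lemma djWeight_of_selfAvoiding {g : ℝ} {s : Fin n → Fin d × Bool} (hs : SelfAvoiding s) :
    djWeight g s = 1 := by
  rw [djWeight_eq_pen, pen_eq_zero_of_selfAvoiding hs]
  simp

end Aux2
/-- Indices with a self-intersection within forward window `τ`. -/
def badIdx (τ : ℕ) {d n : ℕ} (s : Fin n → Fin d × Bool) : Finset (Fin n) :=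
  Finset.univ.filter (fun i => ∃ j : Fin (n+1), (i : ℕ) < (j : ℕ) ∧ (j : ℕ) ≤ (i : ℕ) + τ ∧
    walkPos s j = walkPos s i.castSucc)

/-- Blocks of length `τ` containing a bad index. -/
def dirty (τ : ℕ) {d n : ℕ} (s : Fin n → Fin d × Bool) : Finset ℕ :=
  (badIdx τ s).image (fun i : Fin n => (i : ℕ) / τ)

section Aux3
variable {τ d n : ℕ}

open Classical in
lemma two_mul_dirty_card_le_pen (s : Fin n → Fin d × Bool) :
    2 * (dirty τ s).card ≤ pen s := by
  rcases (dirty τ s).eq_empty_or_nonempty with he | hne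
  · simp [he]
  -- choose a representative bad index for each dirty block
  have hrep : ∀ t ∈ dirty τ s, ∃ i : Fin n, i ∈ badIdx τ s ∧ (i : ℕ) / τ = t := by
    intro t ht
    obtain ⟨i, hi, hit⟩ := Finset.mem_image.mp ht
    exact ⟨i, hi, hit⟩
  haveI : Nonempty (Fin n) := by
    obtain ⟨t, ht⟩ := hne
    obtain ⟨i, -, -⟩ := hrep t ht
    exact ⟨i⟩
  set rep : ℕ → Fin n := fun t =>
    if h : ∃ i : Fin n, i ∈ badIdx τ s ∧ (i : ℕ) / τ = t then h.choose
    else Classical.arbitrary _ with hrepdef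
  have hrep1 : ∀ t ∈ dirty τ s, rep t ∈ badIdx τ s ∧ ((rep t : ℕ)) / τ = t := by
    intro t ht
    have h := hrep t ht
    simp only [hrepdef, dif_pos h]
    exact h.choose_spec
  -- fiber decomposition over the endpoint of the representative
  have hmapsto : ∀ t ∈ dirty τ s, walkPos s (rep t).castSucc ∈ walkRange s :=
    fun t _ => Finset.mem_image_of_mem _ (Finset.mem_univ _)
  rw [Finset.card_eq_sum_card_fiberwise hmapsto, pen, Finset.mul_sum]
  refine Finset.sum_le_sum fun x hx => ?_
  set Fib := (dirty τ s).filter (fun t => walkPos s (rep t).castSucc = x) with hFib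
  rcases Fib.eq_empty_or_nonempty with hfe | hfne
  · simp [hfe]
  -- the images of the representatives of the fiber, inside the visit set of x
  set V := Finset.univ.filter (fun k : Fin (n+1) => walkPos s k = x) with hV
  have hvis : visits s x = V.card := rfl
  set I := Fib.image (fun t => (rep t).castSucc) with hI
  have hIV : I ⊆ V := by
    intro k hk
    obtain ⟨t, ht, hkt⟩ := Finset.mem_image.mp hk
    rw [hV, Finset.mem_filter]
    exact ⟨Finset.mem_univ _, by rw [← hkt]; exact (Finset.mem_filter.mp ht).2⟩
  have hinj : Set.InjOn (fun t => (rep t).castSucc) Fib := by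
    intro t ht t' ht' hee
    have h1 := (hrep1 t (Finset.mem_filter.mp ht).1).2
    have h2 := (hrep1 t' (Finset.mem_filter.mp ht').1).2
    have : ((rep t : ℕ)) = ((rep t' : ℕ)) := by
      have := congrArg (fun k : Fin (n+1) => (k : ℕ)) hee
      simpa using this
    rw [← h1, ← h2, this]
  have hIcard : I.card = Fib.card := Finset.card_image_of_injOn hinj
  -- find an extra visit: witness of the maximal representative
  obtain ⟨hInem⟩ : Nonempty I.Nonempty := ⟨hfne.image _⟩
  have hmax := Finset.max'_mem I hInem
  obtain ⟨t0, ht0, hkt0⟩ := Finset.mem_image.mp hmax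
  have hbad := (hrep1 t0 (Finset.mem_filter.mp ht0).1).1
  obtain ⟨j, hj1, -, hj3⟩ := (Finset.mem_filter.mp hbad).2
  have hjx : walkPos s j = x := by
    rw [hj3, hkt0]
    have := (Finset.mem_filter.mp (hIV hmax)).2
    rw [← hkt0] at this ⊢
    exact (Finset.mem_filter.mp ht0).2
  have hjV : j ∈ V := by rw [hV]; simp [hjx]
  have hjI : j ∉ I := by
    intro hjmem
    have hle : j ≤ I.max' hInem := Finset.le_max' I j hjmem
    have hle2 : (j : ℕ) ≤ ((I.max' hInem) : ℕ) := Fin.le_def.mp hle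
    rw [← hkt0] at hle2
    simp only [Fin.coe_castSucc] at hle2
    omega
  have hcardV : Fib.card + 1 ≤ V.card := by
    have : insert j I ⊆ V := Finset.insert_subset hjV hIV
    calc Fib.card + 1 = I.card + 1 := by rw [hIcard]
    _ = (insert j I).card := (Finset.card_insert_of_notMem hjI).symm
    _ ≤ V.card := Finset.card_le_card this
  -- conclude 2 r ≤ v (v-1)
  have hr1 : 1 ≤ Fib.card := hfne.card_pos
  have hv : Fib.card + 1 ≤ visits s x := by rw [hvis]; exact hcardV
  calc 2 * Fib.card ≤ (Fib.card + 1) * Fib.card := by nlinarith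
  _ ≤ visits s x * (visits s x - 1) := by
      refine Nat.mul_le_mul hv ?_
      omega
end Aux3
section Aux4
variable {τ d n : ℕ}

lemma djWeight_le_pow (τ : ℕ) {g : ℝ} (hg : 0 ≤ g) (s : Fin n → Fin d × Bool) :
    djWeight g s ≤ Real.exp (-(2*g)) ^ (dirty τ s).card := by
  rw [djWeight_eq_pen, ← Real.exp_nat_mul]
  apply Real.exp_le_exp.mpr
  have h := two_mul_dirty_card_le_pen (τ := τ) s
  have h' : (2 * (dirty τ s).card : ℝ) ≤ (pen s : ℝ) := by exact_mod_cast h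
  nlinarith [Nat.cast_nonneg (α := ℝ) (dirty τ s).card]

lemma append_bijective (m N : ℕ) :
    Function.Bijective
      (fun p : (Fin m → Fin d × Bool) × (Fin N → Fin d × Bool) => Fin.append p.1 p.2) := by
  rw [Function.bijective_iff_has_inverse]
  refine ⟨fun s => (fun i => s (Fin.castAdd N i), fun j => s (Fin.natAdd m j)), ?_, ?_⟩
  · rintro ⟨s₁, s₂⟩
    simp [Fin.append_left, Fin.append_right]
  · intro s
    funext i
    refine Fin.addCases (fun j => ?_) (fun j => ?_) i
    · simp [Fin.append_left]
    · simp [Fin.append_right]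

lemma sum_append {m N : ℕ} (F : (Fin (m + N) → Fin d × Bool) → ℝ) :
    ∑ s, F s
      = ∑ s₁ : Fin m → Fin d × Bool, ∑ s₂ : Fin N → Fin d × Bool, F (Fin.append s₁ s₂) := by
  calc ∑ s, F s
      = ∑ p : (Fin m → Fin d × Bool) × (Fin N → Fin d × Bool), F (Fin.append p.1 p.2) :=
        (Fintype.sum_bijective _ (append_bijective m N) _ F (fun p => rfl)).symm
    _ = _ := Fintype.sum_prod_type (fun p => F (Fin.append p.1 p.2))

lemma sExt_append_lt {m N : ℕ} (s₁ : Fin m → Fin d × Bool) (s₂ : Fin N → Fin d × Bool)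
    {i : ℕ} (hi : i < m) : sExt (Fin.append s₁ s₂) i = sExt s₁ i := by
  have hiN : i < m + N := lt_of_lt_of_le hi (Nat.le_add_right m N)
  rw [sExt, sExt, dif_pos hi, dif_pos hiN]
  have : (⟨i, hiN⟩ : Fin (m + N)) = Fin.castAdd N ⟨i, hi⟩ := by
    apply Fin.ext; rfl
  rw [this, Fin.append_left]

lemma sExt_append_add {m N : ℕ} (s₁ : Fin m → Fin d × Bool) (s₂ : Fin N → Fin d × Bool)
    (j : ℕ) : sExt (Fin.append s₁ s₂) (m + j) = sExt s₂ j := by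
  by_cases hj : j < N
  · have hjN : m + j < m + N := by omega
    rw [sExt, sExt, dif_pos hj, dif_pos hjN]
    have : (⟨m + j, hjN⟩ : Fin (m + N)) = Fin.natAdd m ⟨j, hj⟩ := by
      apply Fin.ext; rfl
    rw [this, Fin.append_right]
  · rw [sExt, sExt, dif_neg hj, dif_neg (by omega)]

lemma walkPos_append_left {m N : ℕ} (s₁ : Fin m → Fin d × Bool) (s₂ : Fin N → Fin d × Bool)
    (k : Fin (m + 1)) :
    walkPos (Fin.append s₁ s₂) (Fin.castLE (by omega) k) = walkPos s₁ k := by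
  rw [walkPos_eq_range, walkPos_eq_range]
  refine Finset.sum_congr rfl fun i hi => ?_
  have hik : i < (k : ℕ) := Finset.mem_range.mp hi
  exact sExt_append_lt s₁ s₂ (lt_of_lt_of_le hik (Nat.lt_succ_iff.mp k.isLt))

lemma walkPos_append_right {m N : ℕ} (s₁ : Fin m → Fin d × Bool) (s₂ : Fin N → Fin d × Bool)
    (k : Fin (N + 1)) :
    walkPos (Fin.append s₁ s₂) ⟨m + (k : ℕ), by omega⟩
      = walkPos s₁ (Fin.last m) + walkPos s₂ k := by
  rw [walkPos_eq_range, walkPos_eq_range, walkPos_eq_range]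
  show ∑ i ∈ Finset.range (m + (k : ℕ)), sExt (Fin.append s₁ s₂) i = _
  rw [Finset.sum_range_add]
  congr 1
  · refine Finset.sum_congr rfl fun i hi => ?_
    exact sExt_append_lt s₁ s₂ (Finset.mem_range.mp hi)
  · refine Finset.sum_congr rfl fun j hj => ?_
    exact sExt_append_add s₁ s₂ j

lemma zero_mem_dirty_append {m N : ℕ} {s₁ : Fin m → Fin d × Bool} {s₂ : Fin N → Fin d × Bool}
    (hτ : 0 < τ) (hmτ : m ≤ τ) (hns : ¬ SelfAvoiding s₁) :
    0 ∈ dirty τ (Fin.append s₁ s₂) := by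
  rw [SelfAvoiding, Function.not_injective_iff] at hns
  obtain ⟨k, l, hkl, hne⟩ := hns
  -- arrange a < b with equal positions
  obtain ⟨a, b, hab, heq⟩ : ∃ a b : Fin (m+1), (a:ℕ) < (b:ℕ) ∧ walkPos s₁ a = walkPos s₁ b := by
    rcases hne.lt_or_gt with h1 | h1
    · exact ⟨k, l, h1, hkl⟩
    · exact ⟨l, k, h1, hkl.symm⟩
  have ham : (a : ℕ) < m := lt_of_lt_of_le hab (Nat.lt_succ_iff.mp b.isLt)
  refine Finset.mem_image.mpr ⟨⟨(a:ℕ), by omega⟩, ?_, ?_⟩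
  · rw [badIdx, Finset.mem_filter]
    refine ⟨Finset.mem_univ _, Fin.castLE (by omega) b, ?_, ?_, ?_⟩
    · exact hab
    · show (b : ℕ) ≤ (a : ℕ) + τ
      have := Nat.lt_succ_iff.mp b.isLt
      omega
    · have h1 : walkPos (Fin.append s₁ s₂) (Fin.castLE (by omega) b) = walkPos s₁ b :=
        walkPos_append_left s₁ s₂ b
      have h2 : walkPos (Fin.append s₁ s₂) (Fin.castSucc ⟨(a:ℕ), by omega⟩)
          = walkPos s₁ a := by
        have he : (Fin.castSucc (⟨(a:ℕ), by omega⟩ : Fin (m + N)))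
            = Fin.castLE (by omega) a := by apply Fin.ext; rfl
        rw [he]
        exact walkPos_append_left s₁ s₂ a
      rw [h1, h2, heq]
  · show (a : ℕ) / τ = 0
    exact Nat.div_eq_of_lt (lt_of_lt_of_le ham hmτ)

lemma dirty_shift {N : ℕ} {s₁ : Fin τ → Fin d × Bool} {s₂ : Fin N → Fin d × Bool}
    (hτ : 0 < τ) {t : ℕ} (ht : t ∈ dirty τ s₂) :
    t + 1 ∈ dirty τ (Fin.append s₁ s₂) := by
  obtain ⟨i, hi, hit⟩ := Finset.mem_image.mp ht
  obtain ⟨j, hj1, hj2, hj3⟩ := (Finset.mem_filter.mp hi).2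
  refine Finset.mem_image.mpr ⟨⟨τ + (i : ℕ), by omega⟩, ?_, ?_⟩
  · rw [badIdx, Finset.mem_filter]
    refine ⟨Finset.mem_univ _, ⟨τ + (j : ℕ), by omega⟩, ?_, ?_, ?_⟩
    · show τ + (i:ℕ) < τ + (j:ℕ); omega
    · show τ + (j:ℕ) ≤ τ + (i:ℕ) + τ; omega
    · have h1 : walkPos (Fin.append s₁ s₂) ⟨τ + (j : ℕ), by omega⟩
          = walkPos s₁ (Fin.last τ) + walkPos s₂ j := walkPos_append_right s₁ s₂ j
      have h2 : walkPos (Fin.append s₁ s₂) (Fin.castSucc ⟨τ + (i:ℕ), by omega⟩)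
          = walkPos s₁ (Fin.last τ) + walkPos s₂ i.castSucc := by
        have he : (Fin.castSucc (⟨τ + (i:ℕ), by omega⟩ : Fin (τ + N)))
            = ⟨τ + ((i.castSucc : Fin (N+1)) : ℕ), by omega⟩ := by apply Fin.ext; rfl
        rw [he]
        exact walkPos_append_right s₁ s₂ i.castSucc
      rw [h1, h2, hj3]
  · show (τ + (i:ℕ)) / τ = t + 1
    rw [Nat.add_div_left _ hτ, hit]

lemma dirty_card_append {N : ℕ} (hτ : 0 < τ) (s₁ : Fin τ → Fin d × Bool)
    (s₂ : Fin N → Fin d × Bool) :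
    (dirty τ s₂).card + (if SelfAvoiding s₁ then 0 else 1)
      ≤ (dirty τ (Fin.append s₁ s₂)).card := by
  have hsub : (dirty τ s₂).image (· + 1) ⊆ dirty τ (Fin.append s₁ s₂) := by
    intro t ht
    obtain ⟨t', ht', rfl⟩ := Finset.mem_image.mp ht
    exact dirty_shift hτ ht'
  have hcard : ((dirty τ s₂).image (· + 1)).card = (dirty τ s₂).card :=
    Finset.card_image_of_injective _ (add_left_injective 1)
  by_cases hs : SelfAvoiding s₁
  · simp only [hs, if_pos, add_zero]
    rw [← hcard]
    exact Finset.card_le_card hsub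
  · simp only [hs, if_neg, not_false_iff]
    have h0 : (0 : ℕ) ∉ (dirty τ s₂).image (· + 1) := by
      intro h
      obtain ⟨t', -, ht'⟩ := Finset.mem_image.mp h
      omega
    have : insert 0 ((dirty τ s₂).image (· + 1)) ⊆ dirty τ (Fin.append s₁ s₂) :=
      Finset.insert_subset (zero_mem_dirty_append hτ le_rfl hs) hsub
    calc (dirty τ s₂).card + 1 = (insert 0 ((dirty τ s₂).image (· + 1))).card := by
          rw [Finset.card_insert_of_notMem h0, hcard]
    _ ≤ _ := Finset.card_le_card this

end Aux4
section Aux5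
variable {τ d : ℕ}

lemma sum_pow_dirty_rec (hτ : 0 < τ) {g : ℝ} (hg : 0 ≤ g) (N : ℕ) :
    ∑ s : Fin (τ + N) → Fin d × Bool, Real.exp (-(2*g)) ^ (dirty τ s).card
      ≤ ((csaw d τ : ℝ) + Real.exp (-(2*g)) * (2*d : ℝ)^τ) *
        ∑ s : Fin N → Fin d × Bool, Real.exp (-(2*g)) ^ (dirty τ s).card := by
  set a : ℝ := Real.exp (-(2*g)) with ha
  have ha0 : 0 < a := Real.exp_pos _
  have ha1 : a ≤ 1 := Real.exp_le_one_iff.mpr (by nlinarith)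
  rw [sum_append (fun s => a ^ (dirty τ s).card)]
  have hstep : ∀ (s₁ : Fin τ → Fin d × Bool) (s₂ : Fin N → Fin d × Bool),
      a ^ (dirty τ (Fin.append s₁ s₂)).card
        ≤ (if SelfAvoiding s₁ then (1:ℝ) else a) * a ^ (dirty τ s₂).card := by
    intro s₁ s₂
    have h := dirty_card_append hτ s₁ s₂
    have h2 : a ^ (dirty τ (Fin.append s₁ s₂)).card
        ≤ a ^ ((dirty τ s₂).card + (if SelfAvoiding s₁ then 0 else 1)) :=
      pow_le_pow_of_le_one ha0.le ha1 h
    refine h2.trans_eq ?_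
    rw [pow_add]
    by_cases hs : SelfAvoiding s₁ <;> simp [hs, mul_comm]
  calc ∑ s₁ : Fin τ → Fin d × Bool, ∑ s₂ : Fin N → Fin d × Bool,
        a ^ (dirty τ (Fin.append s₁ s₂)).card
      ≤ ∑ s₁ : Fin τ → Fin d × Bool, ∑ s₂ : Fin N → Fin d × Bool,
        (if SelfAvoiding s₁ then (1:ℝ) else a) * a ^ (dirty τ s₂).card := by
        refine Finset.sum_le_sum fun s₁ _ => Finset.sum_le_sum fun s₂ _ => hstep s₁ s₂
    _ = (∑ s₁ : Fin τ → Fin d × Bool, (if SelfAvoiding s₁ then (1:ℝ) else a)) *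
        ∑ s : Fin N → Fin d × Bool, a ^ (dirty τ s).card := by
        rw [Finset.sum_mul]
        refine Finset.sum_congr rfl fun s₁ _ => ?_
        rw [Finset.mul_sum]
    _ ≤ _ := by
        refine mul_le_mul_of_nonneg_right ?_ ?_
        · rw [Finset.sum_ite, Finset.sum_const, Finset.sum_const]
          have hcard1 : (Finset.univ.filter
              fun s : Fin τ → Fin d × Bool => SelfAvoiding s).card = csaw d τ := rfl
          have hcard2 : ((Finset.univ.filter
              fun s : Fin τ → Fin d × Bool => ¬ SelfAvoiding s).card : ℝ) ≤ (2*d : ℝ)^τ := by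
            calc ((Finset.univ.filter
                fun s : Fin τ → Fin d × Bool => ¬ SelfAvoiding s).card : ℝ)
                ≤ ((Finset.univ : Finset (Fin τ → Fin d × Bool)).card : ℝ) := by
                  exact_mod_cast Finset.card_le_card (Finset.filter_subset _ _)
            _ = (2*d : ℝ)^τ := by
                  rw [Finset.card_univ]
                  simp [Fintype.card_fun, Fintype.card_prod]
                  ring
          rw [hcard1]
          simp only [nsmul_eq_mul, mul_one]
          have := mul_le_mul_of_nonneg_right hcard2 ha0.le
          calc (csaw d τ : ℝ) + _ * a ≤ (csaw d τ : ℝ) + (2*d:ℝ)^τ * a := by linarith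
          _ = _ := by ring
        · exact Finset.sum_nonneg fun s _ => pow_nonneg ha0.le _

lemma sum_pow_dirty_le (hτ : 0 < τ) (hd : 1 ≤ d) {g : ℝ} (hg : 0 ≤ g) (n : ℕ) :
    ∑ s : Fin n → Fin d × Bool, Real.exp (-(2*g)) ^ (dirty τ s).card
      ≤ (2*d : ℝ)^τ * ((csaw d τ : ℝ) + Real.exp (-(2*g)) * (2*d : ℝ)^τ) ^ (n / τ) := by
  set a : ℝ := Real.exp (-(2*g)) with ha
  have ha0 : 0 < a := Real.exp_pos _
  have ha1 : a ≤ 1 := Real.exp_le_one_iff.mpr (by nlinarith)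
  set K : ℝ := (csaw d τ : ℝ) + a * (2*d : ℝ)^τ with hK
  have h2d : (1:ℝ) ≤ 2*d := by
    have : (1:ℝ) ≤ (d:ℝ) := by exact_mod_cast hd
    linarith
  have hK0 : 0 ≤ K := by
    have : (0:ℝ) ≤ (csaw d τ : ℝ) := Nat.cast_nonneg _
    have : (0:ℝ) ≤ a * (2*d:ℝ)^τ := mul_nonneg ha0.le (pow_nonneg (by linarith) _)
    positivity
  induction n using Nat.strong_induction_on with
  | _ n ih =>
    by_cases hn : n < τ
    · have hb : ∑ s : Fin n → Fin d × Bool, a ^ (dirty τ s).card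
          ≤ (2*d : ℝ)^n := by
        calc ∑ s : Fin n → Fin d × Bool, a ^ (dirty τ s).card
            ≤ ∑ _s : Fin n → Fin d × Bool, (1:ℝ) :=
              Finset.sum_le_sum fun s _ => pow_le_one₀ ha0.le ha1
        _ = ((2*d : ℝ))^n := by
              rw [Finset.sum_const, Finset.card_univ]
              simp [Fintype.card_fun, Fintype.card_prod]
              ring
      rw [Nat.div_eq_of_lt hn, pow_zero, mul_one]
      exact hb.trans (pow_le_pow_right₀ h2d hn.le)
    · obtain ⟨m, rfl⟩ : ∃ m, n = τ + m := ⟨n - τ, by omega⟩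
      have hm : m < τ + m := by omega
      calc ∑ s : Fin (τ + m) → Fin d × Bool, a ^ (dirty τ s).card
          ≤ K * ∑ s : Fin m → Fin d × Bool, a ^ (dirty τ s).card :=
            sum_pow_dirty_rec hτ hg m
      _ ≤ K * ((2*d : ℝ)^τ * K ^ (m / τ)) :=
            mul_le_mul_of_nonneg_left (ih m hm) hK0
      _ = (2*d : ℝ)^τ * K ^ (m / τ + 1) := by ring
      _ = (2*d : ℝ)^τ * K ^ ((τ + m) / τ) := by
            rw [Nat.add_div_left _ hτ]

end Aux5
section Aux6
variable {d n : ℕ}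

lemma one_le_csaw (hd : 1 ≤ d) (n : ℕ) : 1 ≤ csaw d n := by
  have h0 : (0:ℕ) < d := hd
  set e : Fin d × Bool := (⟨0, h0⟩, true) with he
  set s0 : Fin n → Fin d × Bool := fun _ => e with hs0
  have hpos : ∀ k : Fin (n+1), walkPos s0 k = (k:ℕ) • stepVec d e := by
    intro k
    rw [walkPos_eq_range]
    have hc : ∀ i ∈ Finset.range (k:ℕ), sExt s0 i = stepVec d e := by
      intro i hi
      have : i < n := lt_of_lt_of_le (Finset.mem_range.mp hi) (Nat.lt_succ_iff.mp k.isLt)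
      rw [sExt, dif_pos this]
    rw [Finset.sum_congr rfl hc, Finset.sum_const, Finset.card_range]
  refine Finset.card_pos.mpr ⟨s0, Finset.mem_filter.mpr ⟨Finset.mem_univ _, ?_⟩⟩
  intro k k' hkk
  rw [hpos, hpos] at hkk
  have h1 := congrFun hkk ⟨0, h0⟩
  have hsv : stepVec d e ⟨0, h0⟩ = 1 := by simp [stepVec, he]
  simp only [Pi.smul_apply, hsv, nsmul_eq_mul, mul_one] at h1
  have : (k : ℕ) = (k' : ℕ) := by exact_mod_cast h1
  exact Fin.ext this

lemma cDJAt_nonneg (d n : ℕ) (g : ℝ) (x : Fin d → ℤ) : 0 ≤ cDJAt d n g x :=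
  Finset.sum_nonneg fun s _ => djWeight_nonneg g s

lemma cDJAt_antitone {g g' : ℝ} (h : g ≤ g') (x : Fin d → ℤ) :
    cDJAt d n g' x ≤ cDJAt d n g x :=
  Finset.sum_le_sum fun s _ => djWeight_antitone h s

lemma cDJAt_le_sum_pow (τ : ℕ) {g : ℝ} (hg : 0 ≤ g) (x : Fin d → ℤ) :
    cDJAt d n g x ≤ ∑ s : Fin n → Fin d × Bool, Real.exp (-(2*g)) ^ (dirty τ s).card := by
  calc cDJAt d n g x ≤ ∑ s : Fin n → Fin d × Bool, djWeight g s :=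
        Finset.sum_le_sum_of_subset_of_nonneg (Finset.filter_subset _ _)
          (fun s _ _ => djWeight_nonneg g s)
  _ ≤ _ := Finset.sum_le_sum fun s _ => djWeight_le_pow τ hg s

lemma cDJAt_eq (g : ℝ) (x : Fin d → ℤ) :
    cDJAt d n g x = (csawAt d n x : ℝ) +
      ∑ s ∈ (Finset.univ.filter
          (fun s : Fin n → Fin d × Bool => walkPos s (Fin.last n) = x)).filter
          (fun s => ¬ SelfAvoiding s), djWeight g s := by
  rw [cDJAt, ← Finset.sum_filter_add_sum_filter_not _ (fun s => SelfAvoiding s)]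
  congr 1
  rw [Finset.sum_congr rfl (fun s hs => djWeight_of_selfAvoiding (Finset.mem_filter.mp hs).2),
    Finset.sum_const, nsmul_eq_mul, mul_one]
  congr 1
  rw [csawAt, Finset.filter_filter]
  congr 1
  ext s
  simp only [Finset.mem_filter]
  tauto

lemma cDJAt_tendsto (d n : ℕ) (x : Fin d → ℤ) :
    Tendsto (fun g : ℝ => cDJAt d n g x) atTop (𝓝 ((csawAt d n x : ℝ))) := by
  simp only [cDJAt_eq]
  set B := (Finset.univ.filter
      (fun s : Fin n → Fin d × Bool => walkPos s (Fin.last n) = x)).filter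
      (fun s => ¬ SelfAvoiding s) with hB
  have h0 : Tendsto (fun g : ℝ => ∑ s ∈ B, djWeight g s) atTop (𝓝 0) := by
    have hsum : Tendsto (fun g : ℝ => ∑ s ∈ B, djWeight g s) atTop
        (𝓝 (∑ _s ∈ B, (0:ℝ))) := by
      refine tendsto_finset_sum _ fun s hs => ?_
      have hns : ¬ SelfAvoiding s := (Finset.mem_filter.mp hs).2
      have hpen : pen s ≠ 0 := by
        have := two_le_pen_of_not_selfAvoiding hns
        omega
      have heq : ∀ g : ℝ, djWeight g s = Real.exp (-g) ^ (pen s) := by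
        intro g
        rw [djWeight_eq_pen, ← Real.exp_nat_mul]
        ring_nf
      simp only [heq]
      have hexp : Tendsto (fun g : ℝ => Real.exp (-g)) atTop (𝓝 0) :=
        Real.tendsto_exp_atBot.comp tendsto_neg_atTop_atBot
      have := hexp.pow (pen s)
      rwa [zero_pow hpen] at this
    simpa using hsum
  have := (tendsto_const_nhds (x := (csawAt d n x : ℝ)) (f := atTop)).add h0
  simpa using this

end Aux6
/-- for `z ∈ [0, μ⁻¹)`, the Domb–Joyce two-point function
`G^{DJ}_{g,z}(x) = Σ_n c_{n,g}^{DJ}(x) zⁿ` converges as `g → ∞` to the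
self-avoiding walk two-point function `G_z(x) = Σ_n c_n(x) zⁿ`. -/
theorem domb_joyce_two_point_limit (d : ℕ) (hd : 1 ≤ d) (muSAW : ℝ)
    (hmuSAW : Tendsto (fun n : ℕ => ((csaw d n : ℝ)) ^ ((n : ℝ)⁻¹)) atTop (𝓝 muSAW))
    (z : ℝ) (hz0 : 0 ≤ z) (hz : z < muSAW⁻¹) (x : Fin d → ℤ) :
    Tendsto (fun g : ℝ => ∑' n : ℕ, cDJAt d n g x * z ^ n) atTop
      (𝓝 (∑' n : ℕ, (csawAt d n x : ℝ) * z ^ n)) := by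
  -- μ ≥ 1
  have hmu1 : (1:ℝ) ≤ muSAW := by
    refine ge_of_tendsto hmuSAW ?_
    filter_upwards [eventually_ge_atTop 1] with n hn
    have h1 : (1:ℝ) ≤ (csaw d n : ℝ) := by exact_mod_cast one_le_csaw hd n
    calc (1:ℝ) = 1 ^ ((n:ℝ)⁻¹) := (Real.one_rpow _).symm
    _ ≤ (csaw d n : ℝ) ^ ((n:ℝ)⁻¹) := Real.rpow_le_rpow zero_le_one h1 (by positivity)
  have hmu0 : (0:ℝ) < muSAW := lt_of_lt_of_le one_pos hmu1
  have hzmu : muSAW * z < 1 := by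
    have h := mul_lt_mul_of_pos_right hz hmu0
    rw [inv_mul_cancel₀ hmu0.ne'] at h
    linarith [h]
  -- choose θ < 1 and a window length τ
  set θ : ℝ := (1 + muSAW * z)/2 with hθdef
  have hθ1 : θ < 1 := by rw [hθdef]; linarith
  have hθ0 : 0 < θ := by
    have : 0 ≤ muSAW * z := mul_nonneg hmu0.le hz0
    rw [hθdef]; linarith
  have hθgt : muSAW * z < θ := by rw [hθdef]; linarith
  have htend : Tendsto (fun n : ℕ => ((csaw d n : ℝ)) ^ ((n : ℝ)⁻¹) * z) atTop
      (𝓝 (muSAW * z)) := hmuSAW.mul_const z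
  obtain ⟨τ, hτθ, hτ1⟩ := ((htend.eventually_lt_const hθgt).and (eventually_ge_atTop 1)).exists
  have hτ0 : 0 < τ := hτ1
  have hcsnn : (0:ℝ) ≤ (csaw d τ : ℝ) := Nat.cast_nonneg _
  -- c_τ z^τ ≤ θ < 1
  have hcz : (csaw d τ : ℝ) * z^τ < 1 := by
    have hbase : (0:ℝ) ≤ ((csaw d τ : ℝ)) ^ ((τ : ℝ)⁻¹) * z :=
      mul_nonneg (Real.rpow_nonneg hcsnn _) hz0
    have h1 : (((csaw d τ : ℝ)) ^ ((τ : ℝ)⁻¹) * z) ^ τ ≤ θ ^ τ :=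
      pow_le_pow_left₀ hbase hτθ.le τ
    have h2 : (((csaw d τ : ℝ)) ^ ((τ : ℝ)⁻¹) * z) ^ τ = (csaw d τ : ℝ) * z^τ := by
      rw [mul_pow, Real.rpow_inv_natCast_pow hcsnn hτ0.ne']
    have h3 : θ ^ τ ≤ θ := by
      calc θ ^ τ ≤ θ ^ 1 := pow_le_pow_of_le_one hθ0.le hθ1.le hτ1
      _ = θ := pow_one θ
    rw [h2] at h1
    linarith
  -- choose g₀
  set M : ℝ := (2*d : ℝ)^τ with hMdef
  have hM1 : (1:ℝ) ≤ M := by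
    have h2d : (1:ℝ) ≤ 2*d := by
      have : (1:ℝ) ≤ (d:ℝ) := by exact_mod_cast hd
      linarith
    exact one_le_pow₀ h2d
  have hM0 : (0:ℝ) ≤ M := le_trans zero_le_one hM1
  have hδ : 0 < 1 - (csaw d τ : ℝ) * z^τ := by linarith
  have hexp0 : Tendsto (fun g : ℝ => Real.exp (-(2*g)) * (M * z^τ)) atTop (𝓝 0) := by
    have h2g : Tendsto (fun g : ℝ => -(2*g)) atTop atBot :=
      tendsto_neg_atTop_atBot.comp (Tendsto.const_mul_atTop two_pos tendsto_id)
    have := (Real.tendsto_exp_atBot.comp h2g).mul_const (M * z^τ)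
    simpa using this
  obtain ⟨g₀, hg₀δ, hg₀0⟩ :=
    ((hexp0.eventually_lt_const hδ).and (eventually_ge_atTop (0:ℝ))).exists
  set a : ℝ := Real.exp (-(2*g₀)) with hadef
  have ha0 : 0 < a := Real.exp_pos _
  set K : ℝ := (csaw d τ : ℝ) + a * M with hKdef
  have hK1 : (1:ℝ) ≤ K := by
    have h1 : (1:ℝ) ≤ (csaw d τ : ℝ) := by exact_mod_cast one_le_csaw hd τ
    have h2 : 0 ≤ a * M := mul_nonneg ha0.le hM0
    rw [hKdef]; linarith
  have hK0 : (0:ℝ) < K := lt_of_lt_of_le one_pos hK1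
  have hKz : K * z^τ < 1 := by
    have hzτ : (0:ℝ) ≤ z^τ := pow_nonneg hz0 τ
    have : K * z^τ = (csaw d τ : ℝ) * z^τ + a * (M * z^τ) := by rw [hKdef]; ring
    rw [this]
    linarith
  -- the geometric comparison ratio
  set r : ℝ := K ^ ((τ:ℝ)⁻¹) * z with hrdef
  have hr0 : 0 ≤ r := mul_nonneg (Real.rpow_nonneg hK0.le _) hz0
  have hr1 : r < 1 := by
    have hrτ : r ^ τ = K * z^τ := by
      rw [hrdef, mul_pow, Real.rpow_inv_natCast_pow hK0.le hτ0.ne']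
    refine (pow_lt_one_iff_of_nonneg hr0 hτ0.ne').mp ?_
    rw [hrτ]; exact hKz
  -- the dominating summable bound
  set bound : ℕ → ℝ := fun n => cDJAt d n g₀ x * z^n with hbdef
  have hboundnn : ∀ n, 0 ≤ bound n := fun n =>
    mul_nonneg (cDJAt_nonneg d n g₀ x) (pow_nonneg hz0 n)
  have hboundle : ∀ n, bound n ≤ M * r^n := by
    intro n
    have h1 : cDJAt d n g₀ x ≤ M * K^(n/τ) := by
      refine (cDJAt_le_sum_pow τ hg₀0 x).trans ?_
      exact sum_pow_dirty_le hτ0 hd hg₀0 n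
    have hKn : (K:ℝ)^(n/τ) ≤ K ^ ((n:ℝ) * (τ:ℝ)⁻¹) := by
      rw [← Real.rpow_natCast K (n/τ)]
      apply Real.rpow_le_rpow_of_exponent_le hK1
      calc ((n/τ : ℕ) : ℝ) ≤ (n:ℝ) / (τ:ℝ) := Nat.cast_div_le
      _ = (n:ℝ) * (τ:ℝ)⁻¹ := div_eq_mul_inv _ _
    have h2 : K^(n/τ) * z^n ≤ r^n := by
      calc K^(n/τ) * z^n ≤ K ^ ((n:ℝ)*(τ:ℝ)⁻¹) * z^n :=
            mul_le_mul_of_nonneg_right hKn (pow_nonneg hz0 n)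
      _ = (K ^ ((τ:ℝ)⁻¹))^n * z^n := by
            rw [← Real.rpow_natCast (K ^ ((τ:ℝ)⁻¹)) n, ← Real.rpow_mul hK0.le]
            ring_nf
      _ = r^n := (mul_pow _ _ n).symm
    calc bound n ≤ (M * K^(n/τ)) * z^n :=
          mul_le_mul_of_nonneg_right h1 (pow_nonneg hz0 n)
    _ = M * (K^(n/τ) * z^n) := by ring
    _ ≤ M * r^n := mul_le_mul_of_nonneg_left h2 hM0
  have hsum : Summable bound :=
    Summable.of_nonneg_of_le hboundnn hboundle
      ((summable_geometric_of_lt_one hr0 hr1).mul_left M)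
  -- dominated convergence
  refine tendsto_tsum_of_dominated_convergence hsum ?_ ?_
  · intro n
    exact (cDJAt_tendsto d n x).mul_const (z^n)
  · filter_upwards [eventually_ge_atTop g₀] with g hg
    intro n
    rw [Real.norm_eq_abs,
      abs_of_nonneg (mul_nonneg (cDJAt_nonneg d n g x) (pow_nonneg hz0 n))]
    exact mul_le_mul_of_nonneg_right (cDJAt_antitone hg x) (pow_nonneg hz0 n)

end StrongInteraction
end

section
/- For every ε > 0 there exists A_0 > 0 such that for all real α ≥ A ≥ A_0 and all integers m ≥ 1, J_m(α) ≤ (1+ε) J_m(A). -/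
/-!
Formalization of statements from "The strong interaction limit of
continuous-time weakly self-avoiding walk" by Brydges, Dahlqvist, Slade.

An `n`-step nearest-neighbour walk on `ℤ^d` starting at the origin is encoded
bijectively by its sequence of steps `s : Fin n → Fin d × Bool`, a step being a
coordinate direction together with a sign.
-/

open scoped BigOperators Topology
open Filter

namespace StrongInteraction

/-- `J_m(α) = ∫_{-α}^∞ ((1+u/α)^{m-1}/(m-1)!) e^{-u²} du`. -/
noncomputable def Jfun (α : ℝ) (m : ℕ) : ℝ :=
  ∫ u in Set.Ioi (-α), ((1 + u / α) ^ (m - 1) / (Nat.factorial (m - 1))) * Real.exp (-u ^ 2)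

/-!
With `I_k(α) = k! J_{k+1}(α)`, integration by parts against `e^{-u²}` gives the recursion
`I_{k+2}(α) = I_{k+1}(α) + (k+1)/(2α²) I_k(α)`. Its coefficients decrease in `α` and all `I_k` are
nonnegative, so `I_k(α) ≤ (1+ε) I_k(A)` for `k = 0, 1` propagates to every `k`. For the base cases,
`I_0(α) ≤ I_1(α) = I_0(α) + e^{-α²}/(2α) ≤ √π + 1/(2A)` whenever `α ≥ A`, while `I_0(A) → √π`.
-/

open MeasureTheory Set Real

theorem le_const_mul_of_two_step_recurrence {x y c d : ℕ → ℝ} {r : ℝ} (hr : 0 ≤ r)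
    (hy : ∀ k, 0 ≤ y k) (hc : ∀ k, 0 ≤ c k) (hcd : ∀ k, c k ≤ d k)
    (hx_rec : ∀ k, x (k + 2) = x (k + 1) + c k * x k)
    (hy_rec : ∀ k, y (k + 2) = y (k + 1) + d k * y k)
    (h₀ : x 0 ≤ r * y 0) (h₁ : x 1 ≤ r * y 1) (k : ℕ) : x k ≤ r * y k := by
  induction k using Nat.twoStepInduction with
  | zero => exact h₀
  | one => exact h₁
  | more k ih ih₁ =>
    calc x (k + 2) = x (k + 1) + c k * x k := hx_rec k
      _ ≤ r * y (k + 1) + c k * (r * y k) := by gcongr; exact hc k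
      _ ≤ r * y (k + 1) + d k * (r * y k) := by gcongr; exacts [mul_nonneg hr (hy k), hcd k]
      _ = r * y (k + 2) := by rw [hy_rec]; ring

theorem integrable_pow_mul_exp_neg_sq (n : ℕ) :
    Integrable fun x : ℝ => x ^ n * exp (-x ^ 2) := by
  simpa using integrable_rpow_mul_exp_neg_mul_sq one_pos (neg_one_lt_zero.trans_le n.cast_nonneg)

theorem integrable_polynomial_eval_mul_exp_neg_sq (p : Polynomial ℝ) :
    Integrable fun x : ℝ => p.eval x * exp (-x ^ 2) := by
  induction p using Polynomial.induction_on' with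
  | add p q hp hq => exact (hp.add hq).congr (ae_of_all _ fun x => by simp [add_mul])
  | monomial n a => simpa [mul_assoc] using (integrable_pow_mul_exp_neg_sq n).const_mul a

theorem integrable_exp_neg_sq : Integrable fun x : ℝ => exp (-x ^ 2) := by
  simpa using integrable_exp_neg_mul_sq one_pos

theorem integral_exp_neg_sq : ∫ x : ℝ, exp (-x ^ 2) = √π := by
  simpa using integral_gaussian 1

noncomputable def gaussWeight (α : ℝ) (k : ℕ) (u : ℝ) : ℝ :=
  (1 + u / α) ^ k * exp (-u ^ 2)

noncomputable def Ifun (α : ℝ) (k : ℕ) : ℝ :=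
  ∫ u in Ioi (-α), gaussWeight α k u

theorem integrable_gaussWeight (α : ℝ) (k : ℕ) : Integrable (gaussWeight α k) := by
  refine (integrable_polynomial_eval_mul_exp_neg_sq
    ((1 + Polynomial.C α⁻¹ * Polynomial.X) ^ k)).congr (ae_of_all _ fun u => ?_)
  simp [gaussWeight, div_eq_inv_mul]

theorem gaussWeight_nonneg {α u : ℝ} (hα : 0 < α) (hu : -α < u) (k : ℕ) :
    0 ≤ gaussWeight α k u := by
  have : 0 ≤ 1 + u / α := by rw [← neg_le_iff_add_nonneg', le_div_iff₀ hα]; linarith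
  unfold gaussWeight
  positivity

theorem gaussWeight_neg_self {α : ℝ} (hα : α ≠ 0) (k : ℕ) :
    gaussWeight α k (-α) = 0 ^ k * exp (-α ^ 2) := by
  simp [gaussWeight, neg_div, div_self hα]

theorem hasDerivAt_gaussWeight {α : ℝ} (hα : α ≠ 0) (k : ℕ) (u : ℝ) :
    HasDerivAt (gaussWeight α k)
      (k / α * gaussWeight α (k - 1) u
        - 2 * α * (gaussWeight α (k + 1) u - gaussWeight α k u)) u := by
  have hlin : HasDerivAt (fun u : ℝ => 1 + u / α) (1 / α) u := by
    simpa using ((hasDerivAt_id u).div_const α).const_add 1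
  have hexp : HasDerivAt (fun u : ℝ => exp (-u ^ 2)) (exp (-u ^ 2) * -(2 * u)) u := by
    simpa using ((hasDerivAt_pow 2 u).neg).exp
  refine ((hlin.pow k).mul hexp).congr_deriv ?_
  simp only [gaussWeight, Pi.pow_apply, pow_succ]
  field_simp
  ring

theorem Ifun_nonneg {α : ℝ} (hα : 0 < α) (k : ℕ) : 0 ≤ Ifun α k :=
  setIntegral_nonneg measurableSet_Ioi fun _ hu => gaussWeight_nonneg hα hu k

/-- `0 ^ k` is the boundary term at `u = -α`; for `k = 0` the truncated `k - 1` has coefficient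
`0`. -/
theorem two_mul_mul_Ifun_succ_sub {α : ℝ} (hα : α ≠ 0) (k : ℕ) :
    2 * α * (Ifun α (k + 1) - Ifun α k) = k / α * Ifun α (k - 1) + 0 ^ k * exp (-α ^ 2) := by
  have hint (j : ℕ) : IntegrableOn (gaussWeight α j) (Ioi (-α)) :=
    (integrable_gaussWeight α j).integrableOn
  have hint_diff : IntegrableOn (fun u => gaussWeight α (k + 1) u - gaussWeight α k u) (Ioi (-α)) :=
    (hint _).sub' (hint _)
  have hint_deriv : IntegrableOn (fun u => k / α * gaussWeight α (k - 1) u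
      - 2 * α * (gaussWeight α (k + 1) u - gaussWeight α k u)) (Ioi (-α)) :=
    ((hint _).const_mul _).sub' (hint_diff.const_mul _)
  have hderiv (u : ℝ) := hasDerivAt_gaussWeight hα k u
  have hftc := integral_Ioi_of_hasDerivAt_of_tendsto' (fun u _ => hderiv u) hint_deriv
    (tendsto_zero_of_hasDerivAt_of_integrableOn_Ioi (fun u _ => hderiv u) hint_deriv (hint k))
  rw [integral_sub ((hint _).const_mul _) (hint_diff.const_mul _), integral_const_mul,
    integral_const_mul, integral_sub (hint _) (hint _), gaussWeight_neg_self hα] at hftc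
  simp only [Ifun]
  linarith

theorem Ifun_one {α : ℝ} (hα : α ≠ 0) : Ifun α 1 = Ifun α 0 + exp (-α ^ 2) / (2 * α) := by
  have := two_mul_mul_Ifun_succ_sub hα 0
  simp only [CharP.cast_eq_zero, zero_div, zero_mul, pow_zero, one_mul, zero_add] at this
  field_simp
  linarith

theorem Ifun_add_two {α : ℝ} (hα : α ≠ 0) (k : ℕ) :
    Ifun α (k + 2) = Ifun α (k + 1) + (k + 1) / (2 * α ^ 2) * Ifun α k := by
  have := two_mul_mul_Ifun_succ_sub hα (k + 1)
  simp only [Nat.cast_succ, add_tsub_cancel_right, pow_succ, mul_zero, zero_mul, add_zero] at this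
  field_simp at this ⊢
  linear_combination this

theorem Ifun_zero (α : ℝ) : Ifun α 0 = ∫ u in Ioi (-α), exp (-u ^ 2) := by
  simp [Ifun, gaussWeight]

theorem Ifun_zero_le_Ifun_one {α : ℝ} (hα : 0 < α) : Ifun α 0 ≤ Ifun α 1 := by
  rw [Ifun_one hα.ne']
  linarith [show 0 ≤ exp (-α ^ 2) / (2 * α) by positivity]

theorem Ifun_zero_le_sqrt_pi (α : ℝ) : Ifun α 0 ≤ √π := by
  rw [Ifun_zero, ← integral_exp_neg_sq]
  exact setIntegral_le_integral integrable_exp_neg_sq (ae_of_all _ fun u => (exp_pos _).le)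

theorem Ifun_one_le {α : ℝ} (hα : 0 < α) : Ifun α 1 ≤ √π + 1 / (2 * α) := by
  rw [Ifun_one hα.ne']
  have : exp (-α ^ 2) / (2 * α) ≤ 1 / (2 * α) := by
    gcongr
    exact exp_le_one_iff.2 (by nlinarith)
  linarith [Ifun_zero_le_sqrt_pi α]

theorem tendsto_Ifun_zero : Tendsto (fun A => Ifun A 0) atTop (𝓝 √π) := by
  have hunion : ⋃ A : ℝ, Ioi (-A) = univ :=
    eq_univ_of_forall fun u => mem_iUnion.2 ⟨1 - u, by simp⟩
  have := tendsto_setIntegral_of_monotone (fun A : ℝ => measurableSet_Ioi)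
    (fun _ _ h => Ioi_subset_Ioi (neg_le_neg h)) integrable_exp_neg_sq.integrableOn
  simpa only [hunion, Measure.restrict_univ, integral_exp_neg_sq, ← Ifun_zero] using this

theorem eventually_Ifun_zero_one_le {ε : ℝ} (hε : 0 < ε) :
    ∀ᶠ A in atTop, ∀ α, A ≤ α →
      Ifun α 0 ≤ (1 + ε) * Ifun A 0 ∧ Ifun α 1 ≤ (1 + ε) * Ifun A 1 := by
  have hlim : Tendsto (fun A : ℝ => √π + 1 / (2 * A)) atTop (𝓝 (√π + 0)) :=
    tendsto_const_nhds.add ((tendsto_id.const_mul_atTop two_pos).inv_tendsto_atTop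
      |>.congr fun _ => (one_div _).symm)
  have hgap : √π + 0 < (1 + ε) * √π := by nlinarith [sqrt_pos.2 pi_pos]
  filter_upwards [hlim.eventually_lt (tendsto_Ifun_zero.const_mul (1 + ε)) hgap,
    eventually_gt_atTop 0] with A hA hA₀ α hAα
  have hα₀ : 0 < α := hA₀.trans_le hAα
  have hα_le : Ifun α 1 ≤ √π + 1 / (2 * A) :=
    (Ifun_one_le hα₀).trans (by gcongr)
  have hA_ge : (1 + ε) * Ifun A 0 ≤ (1 + ε) * Ifun A 1 := by
    gcongr
    exact Ifun_zero_le_Ifun_one hA₀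
  constructor <;> linarith [Ifun_zero_le_Ifun_one hα₀]

theorem eventually_Ifun_le {ε : ℝ} (hε : 0 < ε) :
    ∀ᶠ A in atTop, ∀ α, A ≤ α → ∀ k, Ifun α k ≤ (1 + ε) * Ifun A k := by
  filter_upwards [eventually_Ifun_zero_one_le hε, eventually_gt_atTop 0] with A hbase hA α hAα
  have hα : 0 < α := hA.trans_le hAα
  refine le_const_mul_of_two_step_recurrence (c := fun k => (k + 1) / (2 * α ^ 2))
    (d := fun k => (k + 1) / (2 * A ^ 2)) (by linarith) (Ifun_nonneg hA)
    (fun k => by positivity) (fun k => by gcongr) (Ifun_add_two hα.ne') (Ifun_add_two hA.ne')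
    (hbase α hAα).1 (hbase α hAα).2

theorem Jfun_eq_Ifun_div (α : ℝ) (m : ℕ) : Jfun α m = Ifun α (m - 1) / (m - 1).factorial := by
  rw [Ifun, ← integral_div]
  refine setIntegral_congr_fun measurableSet_Ioi fun u _ => ?_
  simp only [gaussWeight]
  ring

/-- for every `ε > 0` there is `A₀ > 0` such that
`J_m(α) ≤ (1+ε) J_m(A)` for all `α ≥ A ≥ A₀` and all `m ≥ 1`. -/
theorem J_almost_antitone (ε : ℝ) (hε : 0 < ε) :
    ∃ A₀ : ℝ, 0 < A₀ ∧ ∀ A α : ℝ, A₀ ≤ A → A ≤ α → ∀ m : ℕ, 1 ≤ m →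
      Jfun α m ≤ (1 + ε) * Jfun A m := by
  obtain ⟨A₀, hA₀⟩ := eventually_atTop.1 (eventually_Ifun_le hε)
  refine ⟨max A₀ 1, by positivity, fun A α hA hAα m _ => ?_⟩
  rw [Jfun_eq_Ifun_div, Jfun_eq_Ifun_div, mul_div_assoc']
  gcongr
  exact hA₀ A (le_of_max_le_left hA) α hAα (m - 1)

end StrongInteraction
end
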